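/- arXiv:2502.19254 — 4 statements merged into one kernel-verified Lean document; each statement's English description precedes it below -/
import Mathlib

section
/- The operators E ↦ E^t and E ↦ E^X commute: for every measurable function E : Z^{n+1} → [0,∞], (E^t)^X = (E^X)^t. -/
open MeasureTheory ProbabilityTheory
open scoped ENNReal NNReal

noncomputable section

/-- `E` is a *randomness e-variable*: a measurable nonnegative function on `Z^{n+1}` whose
integral is at most 1 under every product (IID) probability measure `Q^{n+1}`. -/
def IsRandE {Z : Type*} [MeasurableSpace Z] (n : ℕ) (E : (Fin (n+1) → Z) → ℝ≥0∞) : Prop :=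
  Measurable E ∧
    ∀ (Q : Measure Z), IsProbabilityMeasure Q →
      ∫⁻ z, E z ∂(Measure.pi fun _ : Fin (n+1) => Q) ≤ 1

/-- A probability measure on `Z^{n+1}` is *exchangeable* if it is invariant under all
permutations of the `n+1` coordinates. -/
def IsExchangeable {Z : Type*} [MeasurableSpace Z] (n : ℕ)
    (R : Measure (Fin (n+1) → Z)) : Prop :=
  ∀ π : Equiv.Perm (Fin (n+1)), Measure.map (fun z i => z (π i)) R = R

/-- `E` is an *exchangeability e-variable*: its integral is at most 1 under every
exchangeable probability measure on `Z^{n+1}`. -/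
def IsExchE {Z : Type*} [MeasurableSpace Z] (n : ℕ) (E : (Fin (n+1) → Z) → ℝ≥0∞) : Prop :=
  Measurable E ∧
    ∀ (R : Measure (Fin (n+1) → Z)), IsProbabilityMeasure R → IsExchangeable n R →
      ∫⁻ z, E z ∂(R) ≤ 1

/-- A function on `Z^{n+1}` is *train-invariant* if it is invariant under permutations of the
first `n` (training) examples. -/
def TrainInv {Z α : Type*} (n : ℕ) (E : (Fin (n+1) → Z) → α) : Prop :=
  ∀ (z : Fin (n+1) → Z) (σ : Equiv.Perm (Fin n)),
    E (Fin.snoc (fun i => z (Fin.castSucc (σ i))) (z (Fin.last n))) = E z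

/-- `E^i`: the average of `E` over all permutations of the `n+1` examples. -/
def Ei {Z : Type*} (n : ℕ) (E : (Fin (n+1) → Z) → ℝ≥0∞) : (Fin (n+1) → Z) → ℝ≥0∞ :=
  fun z => (∑ π : Equiv.Perm (Fin (n+1)), E (fun i => z (π i))) / (Nat.factorial (n+1) : ℝ≥0∞)

/-- `E^X := E / E^i`, with the convention `0/0 := 1`. -/
def EX {Z : Type*} (n : ℕ) (E : (Fin (n+1) → Z) → ℝ≥0∞) : (Fin (n+1) → Z) → ℝ≥0∞ :=
  fun z => if E z = 0 ∧ Ei n E z = 0 then 1 else E z / Ei n E z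

/-- `E^t`: the average of `E` over all permutations of the `n` training examples. -/
def Et {Z : Type*} (n : ℕ) (E : (Fin (n+1) → Z) → ℝ≥0∞) : (Fin (n+1) → Z) → ℝ≥0∞ :=
  fun z => (∑ σ : Equiv.Perm (Fin n),
      E (Fin.snoc (fun i => z (Fin.castSucc (σ i))) (z (Fin.last n)))) / (Nat.factorial n : ℝ≥0∞)

/-- Replace the label of the test (last) example by `y`, keeping the training examples and the
test object: this is `(z_1, …, z_n, (x_{n+1}, y))`. -/
def withLabel {X Y : Type*} (n : ℕ) (z : Fin (n+1) → X × Y) (y : Y) : Fin (n+1) → X × Y :=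
  Fin.snoc (fun i : Fin n => z (Fin.castSucc i)) ((z (Fin.last n)).1, y)


/-!
`E^i` is invariant under permuting its argument, and averaging first over the training
permutations changes nothing: `(E^t)^i = E^i`. So where `E^i ≠ 0` both sides are `E^t / E^i`,
the common denominator leaving the average; where `E^i = 0`, `E` vanishes on the whole orbit
and both sides are `1`.
-/

open scoped Nat

def extPerm (n : ℕ) (σ : Equiv.Perm (Fin n)) : Equiv.Perm (Fin (n+1)) :=
  (finSuccEquivLast (n := n)).symm.permCongr (Equiv.optionCongr σ)

@[simp] lemma extPerm_castSucc (n : ℕ) (σ : Equiv.Perm (Fin n)) (i : Fin n) :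
    extPerm n σ (Fin.castSucc i) = Fin.castSucc (σ i) := by
  simp [extPerm]

@[simp] lemma extPerm_last (n : ℕ) (σ : Equiv.Perm (Fin n)) :
    extPerm n σ (Fin.last n) = Fin.last n := by
  simp [extPerm]

lemma snoc_comp_castSucc_perm {Z : Type*} (n : ℕ) (σ : Equiv.Perm (Fin n))
    (z : Fin (n+1) → Z) :
    (Fin.snoc (fun i => z (Fin.castSucc (σ i))) (z (Fin.last n)) : Fin (n+1) → Z)
      = fun j => z (extPerm n σ j) := by
  funext j
  induction j using Fin.lastCases <;> simp

section Averages

variable {Z : Type*} (n : ℕ) (E : (Fin (n+1) → Z) → ℝ≥0∞) (z : Fin (n+1) → Z)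

lemma Et_eq_sum_extPerm :
    Et n E z = (∑ σ : Equiv.Perm (Fin n), E (fun i => z (extPerm n σ i))) / (n ! : ℝ≥0∞) := by
  simp only [Et, snoc_comp_castSucc_perm]

lemma Ei_comp_perm (τ : Equiv.Perm (Fin (n+1))) : Ei n E (fun i => z (τ i)) = Ei n E z := by
  unfold Ei
  congr 1
  exact Fintype.sum_equiv (Equiv.mulLeft τ) _ _ fun _ => rfl

lemma Ei_eq_zero_iff : Ei n E z = 0 ↔ ∀ π : Equiv.Perm (Fin (n+1)), E (fun i => z (π i)) = 0 := by
  simp [Ei, ENNReal.div_eq_zero_iff, Finset.sum_eq_zero_iff, ENNReal.natCast_ne_top]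

lemma EX_of_Ei_eq_zero (h : Ei n E z = 0) : EX n E z = 1 := by
  have hz : E z = 0 := (Ei_eq_zero_iff n E z).1 h 1
  simp [EX, hz, h]

lemma EX_of_Ei_ne_zero (h : Ei n E z ≠ 0) : EX n E z = E z / Ei n E z := by
  simp [EX, h]

/-- For each `σ`, `π * extPerm n σ` runs over all permutations as `π` does. -/
lemma Ei_Et : Ei n (Et n E) = Ei n E := by
  funext z
  unfold Ei
  congr 1
  have hfac : (n ! : ℝ≥0∞) ≠ 0 := by exact_mod_cast n.factorial_ne_zero
  calc ∑ π : Equiv.Perm (Fin (n+1)), Et n E (fun i => z (π i))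
      = (∑ σ : Equiv.Perm (Fin n), ∑ π : Equiv.Perm (Fin (n+1)),
          E (fun i => z ((π * extPerm n σ) i))) / (n ! : ℝ≥0∞) := by
        simp only [Et_eq_sum_extPerm, div_eq_mul_inv, ← Finset.sum_mul]
        rw [Finset.sum_comm]
        rfl
    _ = (∑ _σ : Equiv.Perm (Fin n), ∑ π : Equiv.Perm (Fin (n+1)), E (fun i => z (π i)))
          / (n ! : ℝ≥0∞) := by
        congr 1
        exact Finset.sum_congr rfl fun σ _ =>
          Fintype.sum_equiv (Equiv.mulRight (extPerm n σ)) _ _ fun _ => rfl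
    _ = ∑ π : Equiv.Perm (Fin (n+1)), E (fun i => z (π i)) := by
        rw [Finset.sum_const, Finset.card_univ, Fintype.card_perm, Fintype.card_fin,
          nsmul_eq_mul, mul_comm, ENNReal.mul_div_cancel_right hfac (ENNReal.natCast_ne_top _)]

end Averages

theorem stmt5_general {Z : Type*} (n : ℕ)
    (E : (Fin (n+1) → Z) → ℝ≥0∞) :
    EX n (Et n E) = Et n (EX n E) := by
  funext z
  have hEi : ∀ σ, Ei n E (fun i => z (extPerm n σ i)) = Ei n E z := fun σ =>
    Ei_comp_perm n E z (extPerm n σ)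
  rw [Et_eq_sum_extPerm n (EX n E)]
  by_cases h : Ei n E z = 0
  · rw [EX_of_Ei_eq_zero n _ z (by rwa [Ei_Et])]
    simp_rw [EX_of_Ei_eq_zero n E _ ((hEi _).trans h)]
    rw [Finset.sum_const, Finset.card_univ, Fintype.card_perm, Fintype.card_fin, nsmul_one,
      ENNReal.div_self (by exact_mod_cast n.factorial_ne_zero) (ENNReal.natCast_ne_top _)]
  · rw [EX_of_Ei_ne_zero n _ z (by rwa [Ei_Et]), Ei_Et, Et_eq_sum_extPerm]
    simp_rw [EX_of_Ei_ne_zero n E _ ((hEi _).trans_ne h), hEi, div_eq_mul_inv, Finset.sum_mul]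
    exact Finset.sum_congr rfl fun _ _ => mul_right_comm _ _ _

/-- Lemma: the operators `E ↦ E^t` and `E ↦ E^X` commute: `(E^t)^X = (E^X)^t`. -/
theorem stmt5 {Z : Type*} [MeasurableSpace Z] (n : ℕ) (hn : 1 ≤ n)
    (E : (Fin (n+1) → Z) → ℝ≥0∞) (hE : Measurable E) :
    EX n (Et n E) = Et n (EX n E) :=
  stmt5_general n E

end
end

section
/- Let n ≥ 1, let Z = X × Y with X a nonempty measurable space and Y a measurable space, let B : Z ↪ Y be a Markov kernel, and let E : Z^{n+1} → [0,∞] be an exchangeability e-variable. Then G(z_1,…,z_n,z_{n+1}) := ∫_Y [E(z_1,…,z_n,x_{n+1},y) / E^t(z_1,…,z_n,x_{n+1},y)] B(dy | z_{n+1}) (with 0/0 := 0 and z_{n+1} = (x_{n+1},y_{n+1})) is a test-conditional exchangeability e-variable: for every (z_1,…,z_{n+1}) ∈ Z^{n+1}, (1/n!) Σ_σ G(z_{σ(1)},…,z_{σ(n)},z_{n+1}) ≤ 1, the sum over all permutations σ of {1,…,n}. -/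
/-!
Fix the training examples and the test object, and write `w_y` for the sequence with test label
`y`. Permuting the training examples does not change `E^t(w_y)`, so for each `y` the sum over `σ`
of the integrands is `Σ_σ E(σ w_y) / E^t(w_y) = n! E^t(w_y) / E^t(w_y) ≤ n!`. Since the sum of the
integrals is at most the integral of the sum and `B(·|z_{n+1})` is a probability measure, the
average over `σ` of `G` is at most `1`.
-/

open MeasureTheory ProbabilityTheory
open scoped ENNReal NNReal

noncomputable section

theorem ENNReal.div_div_le (a b : ℝ≥0∞) : a / (a / b) ≤ b := by
  rcases eq_or_ne a 0 with rfl | ha₀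
  · simp
  rcases eq_or_ne a ∞ with rfl | ha
  · rcases eq_or_ne b ∞ with rfl | hb
    · exact le_top
    · simp [ENNReal.top_div_of_ne_top hb]
  · rw [ENNReal.div_div_cancel ha₀ ha]

theorem MeasureTheory.sum_lintegral_le_lintegral_sum {α ι : Type*} [MeasurableSpace α]
    (μ : Measure α) (s : Finset ι) (f : ι → α → ℝ≥0∞) :
    ∑ i ∈ s, ∫⁻ a, f i a ∂μ ≤ ∫⁻ a, ∑ i ∈ s, f i a ∂μ := by
  classical
  induction s using Finset.induction_on with
  | empty => simp
  | insert i s hi ih =>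
    simp only [Finset.sum_insert hi]
    exact (add_le_add le_rfl ih).trans (le_lintegral_add _ _)

def trainPerm {Z : Type*} {n : ℕ} (σ : Equiv.Perm (Fin n)) (z : Fin (n+1) → Z) :
    Fin (n+1) → Z :=
  Fin.snoc (fun i => z (Fin.castSucc (σ i))) (z (Fin.last n))

@[simp]
theorem trainPerm_last {Z : Type*} {n : ℕ} (σ : Equiv.Perm (Fin n)) (z : Fin (n+1) → Z) :
    trainPerm σ z (Fin.last n) = z (Fin.last n) :=
  Fin.snoc_last _ _

theorem trainPerm_mul {Z : Type*} {n : ℕ} (σ τ : Equiv.Perm (Fin n)) (z : Fin (n+1) → Z) :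
    trainPerm τ (trainPerm σ z) = trainPerm (σ * τ) z := by
  funext j
  induction j using Fin.lastCases with
  | last => simp [trainPerm]
  | cast j => simp [trainPerm]

theorem Et_eq_sum_trainPerm {Z : Type*} (n : ℕ) (E : (Fin (n+1) → Z) → ℝ≥0∞)
    (z : Fin (n+1) → Z) :
    Et n E z = (∑ σ : Equiv.Perm (Fin n), E (trainPerm σ z)) / (n.factorial : ℝ≥0∞) :=
  rfl

theorem trainInv_Et {Z : Type*} (n : ℕ) (E : (Fin (n+1) → Z) → ℝ≥0∞) : TrainInv n (Et n E) := by
  intro z σ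
  change Et n E (trainPerm σ z) = Et n E z
  simp only [Et_eq_sum_trainPerm, trainPerm_mul]
  congr 1
  exact Equiv.sum_comp (Equiv.mulLeft σ) fun τ => E (trainPerm τ z)

theorem sum_div_Et_le_factorial {Z : Type*} (n : ℕ) (E : (Fin (n+1) → Z) → ℝ≥0∞)
    (z : Fin (n+1) → Z) :
    ∑ σ : Equiv.Perm (Fin n), E (trainPerm σ z) / Et n E z ≤ n.factorial := by
  rw [Et_eq_sum_trainPerm]
  simp only [div_eq_mul_inv, ← Finset.sum_mul]
  exact ENNReal.div_div_le _ _

theorem withLabel_trainPerm {X Y : Type*} (n : ℕ) (z : Fin (n+1) → X × Y)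
    (σ : Equiv.Perm (Fin n)) (y : Y) :
    withLabel n (trainPerm σ z) y = trainPerm σ (withLabel n z y) := by
  funext j
  induction j using Fin.lastCases with
  | last => simp [withLabel, trainPerm]
  | cast j => simp [withLabel, trainPerm]

theorem stmt6_general {X Y : Type*} [MeasurableSpace X] [MeasurableSpace Y]
    (n : ℕ) (B : Kernel (X × Y) Y) [IsMarkovKernel B]
    (E : (Fin (n+1) → X × Y) → ℝ≥0∞) :
    ∀ z : Fin (n+1) → X × Y,
      Et n (fun w => ∫⁻ y, E (withLabel n w y) / Et n E (withLabel n w y)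
          ∂(B (w (Fin.last n)))) z ≤ 1 := by
  intro z
  rw [Et_eq_sum_trainPerm]
  refine ENNReal.div_le_of_le_mul ?_
  calc ∑ σ : Equiv.Perm (Fin n), ∫⁻ y, E (withLabel n (trainPerm σ z) y)
          / Et n E (withLabel n (trainPerm σ z) y) ∂(B (trainPerm σ z (Fin.last n)))
      = ∑ σ : Equiv.Perm (Fin n), ∫⁻ y, E (trainPerm σ (withLabel n z y))
          / Et n E (withLabel n z y) ∂(B (z (Fin.last n))) := by
        simp only [withLabel_trainPerm, trainPerm_last]
        congr! 4 with σ y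
        exact trainInv_Et n E _ σ
    _ ≤ ∫⁻ y, ∑ σ : Equiv.Perm (Fin n), E (trainPerm σ (withLabel n z y))
          / Et n E (withLabel n z y) ∂(B (z (Fin.last n))) :=
        sum_lintegral_le_lintegral_sum _ _ _
    _ ≤ ∫⁻ _, (n.factorial : ℝ≥0∞) ∂(B (z (Fin.last n))) :=
        lintegral_mono fun y => sum_div_Et_le_factorial n E _
    _ = 1 * n.factorial := by simp

/-- Theorem: for an exchangeability e-variable `E`, the function
`G(z_1,…,z_n,z_{n+1}) := ∫ (E(z_1,…,z_n,x_{n+1},y) / E^t(z_1,…,z_n,x_{n+1},y)) B(dy|z_{n+1})`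
(with `0/0 := 0`) is a test-conditional exchangeability e-variable:
`(1/n!) Σ_σ G(z_{σ(1)},…,z_{σ(n)},z_{n+1}) ≤ 1` for every data sequence, i.e. `E^t` applied to
`G` is bounded by 1 pointwise. -/
theorem stmt6 {X Y : Type*} [MeasurableSpace X] [Nonempty X] [MeasurableSpace Y]
    (n : ℕ) (hn : 1 ≤ n) (B : Kernel (X × Y) Y) [IsMarkovKernel B]
    (E : (Fin (n+1) → X × Y) → ℝ≥0∞) (hE : IsExchE n E) :
    ∀ z : Fin (n+1) → X × Y,
      Et n (fun w => ∫⁻ y, E (withLabel n w y) / Et n E (withLabel n w y)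
          ∂(B (w (Fin.last n)))) z ≤ 1 :=
  stmt6_general n B E
end
end

section
/- Let n ≥ 1, let Z = X × Y with X a nonempty measurable space and Y a measurable space, let B : Z ↪ Y be a Markov kernel, and let E : Z^{n+1} → [0,∞] be a randomness e-variable. Then G(z_1,…,z_n,z_{n+1}) := e^{-1/2} ∫_Y sqrt( E(z_1,…,z_n,x_{n+1},y) / E^{tX}(z_1,…,z_n,x_{n+1},y) ) B(dy | z_{n+1}) (with 0/0 := 0 and z_{n+1} = (x_{n+1},y_{n+1})) is a randomness e-variable. -/
open MeasureTheory ProbabilityTheory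
open scoped ENNReal NNReal

noncomputable section

/-!
Let `ν = Q^n ⊗ Q'` be the law of `(z_1, …, z_n, (x_{n+1}, y))` for `z ∼ Q^{n+1}` and
`y ∼ B(·|z_{n+1})`, so that `∫ G dQ^{n+1} = e^{-1/2} ∫ √(E / E^{tX}) dν`. Where `E^t < ∞` we have
`E / E^{tX} ≤ (E / E^t) · (E^t)^i`, and Cauchy–Schwarz bounds the integral by
`√(∫ E / E^t dν) · √(∫ (E^t)^i dν)`.

* `ν` is invariant under permutations of the training examples, over which `E / E^t` averages to
  at most `1`; hence `∫ E / E^t dν ≤ 1`.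
* `(E^t)^i` is symmetric and `∫ (E^t)^i dR^{n+1} = ∫ E dR^{n+1} ≤ 1` for every `R`. For
  `R = (1/(n+1)) Q' + (n/(n+1)) Q`, the `n+1` terms of `R^{n+1}` with exactly one factor `Q'`
  each contribute `(n/(n+1))^n / (n+1) · ∫ (E^t)^i dν`, so `∫ (E^t)^i dν ≤ (1 + 1/n)^n ≤ e`.
  In particular `E^t < ∞` holds `ν`-almost everywhere.

Together: `∫ G dQ^{n+1} ≤ e^{-1/2} · 1 · e^{1/2} = 1`.
-/

open Equiv

namespace MeasureTheory.Measure

variable {Z ι : Type*} [MeasurableSpace Z] [Fintype ι]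

theorem measurePreserving_comp_perm (μ : ι → Measure Z) [∀ i, SigmaFinite (μ i)]
    (π : Perm ι) :
    MeasurePreserving (fun w : ι → Z => w ∘ π) (Measure.pi μ) (Measure.pi fun i => μ (π i)) :=
  measurePreserving_arrowCongr' μ (fun i => μ (π i)) π.symm (MeasurableEquiv.refl Z)
    fun i => by rw [π.apply_symm_apply]; exact MeasurePreserving.id _

theorem pi_finsetSum [DecidableEq ι] {κ : Type*} [Fintype κ] (m : ι → κ → Measure Z)
    [∀ i k, IsFiniteMeasure (m i k)] :
    Measure.pi (fun i => ∑ k, m i k) = ∑ g : ι → κ, Measure.pi fun i => m i (g i) := by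
  have : ∀ i, IsFiniteMeasure (∑ k, m i k) := fun i =>
    ⟨by simp [finsetSum_apply, measure_lt_top]⟩
  refine pi_eq fun s _ => ?_
  simp only [finsetSum_apply, pi_pi]
  exact (Fintype.prod_sum fun i k => m i k (s i)).symm

theorem pi_nnreal_smul (c : ι → ℝ≥0) (μ : ι → Measure Z) [∀ i, SigmaFinite (μ i)] :
    Measure.pi (fun i => c i • μ i) = (∏ i, c i) • Measure.pi μ := by
  refine pi_eq fun s _ => ?_
  simp only [smul_apply, pi_pi, ENNReal.smul_def, smul_eq_mul, ENNReal.ofNNReal_finsetProd,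
    Finset.prod_mul_distrib]

theorem sum_pi_update_le_pi_add [DecidableEq ι] (α β : Measure Z) [IsFiniteMeasure α]
    [IsFiniteMeasure β] :
    ∑ k, Measure.pi (Function.update (fun _ => β) k α) ≤ Measure.pi fun _ : ι => α + β := by
  have : ∀ b : Bool, IsFiniteMeasure (if b then α else β) := fun b => by
    cases b <;> simpa
  have hinj : Function.Injective fun k : ι => fun j => decide (j = k) := fun k k' h => by
    simpa using congrFun h k
  calc ∑ k, Measure.pi (Function.update (fun _ => β) k α)
      = ∑ g ∈ Finset.univ.image fun k : ι => fun j => decide (j = k),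
          Measure.pi fun i => if g i then α else β := by
        rw [Finset.sum_image fun k _ k' _ h => hinj h]
        refine Finset.sum_congr rfl fun k _ => ?_
        congr 1
        funext i
        by_cases h : i = k <;> simp [h]
    _ ≤ ∑ g : ι → Bool, Measure.pi fun i => if g i then α else β :=
        Finset.sum_le_sum_of_subset_of_nonneg (Finset.subset_univ _) fun _ _ _ => Measure.zero_le _
    _ = Measure.pi fun _ => ∑ b : Bool, if b then α else β :=
        (pi_finsetSum fun _ (b : Bool) => if b then α else β).symm
    _ = Measure.pi fun _ => α + β := by simp

end MeasureTheory.Measure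

section PermAvg

variable {Z ι G : Type*} [Group G] [Fintype G] (φ : G →* Perm ι)

def permAvg (E : (ι → Z) → ℝ≥0∞) (w : ι → Z) : ℝ≥0∞ :=
  (∑ g, E (w ∘ φ g)) / Fintype.card G

variable {φ} {E : (ι → Z) → ℝ≥0∞}

theorem sum_comp_perm_eq_card_mul_permAvg (w : ι → Z) :
    ∑ g, E (w ∘ φ g) = Fintype.card G * permAvg φ E w :=
  (ENNReal.mul_div_cancel (by simp) (ENNReal.natCast_ne_top _)).symm

theorem permAvg_comp (h : G) (w : ι → Z) : permAvg φ E (w ∘ φ h) = permAvg φ E w := by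
  unfold permAvg
  congr 1
  refine Fintype.sum_equiv (Equiv.mulLeft h) _ _ fun g => ?_
  simp [Function.comp_assoc, Perm.coe_mul]

theorem le_card_mul_permAvg (w : ι → Z) : E w ≤ Fintype.card G * permAvg φ E w := by
  rw [← sum_comp_perm_eq_card_mul_permAvg]
  simpa using Finset.single_le_sum (f := fun g => E (w ∘ φ g)) (fun _ _ => bot_le)
    (Finset.mem_univ 1)

theorem eq_zero_of_permAvg_eq_zero {w : ι → Z} (h : permAvg φ E w = 0) : E w = 0 := by
  simpa [h] using le_card_mul_permAvg (φ := φ) (E := E) w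

variable [MeasurableSpace Z]

theorem measurable_comp_perm (π : Perm ι) : Measurable fun w : ι → Z => w ∘ π :=
  measurable_pi_lambda _ fun _ => measurable_pi_apply _

theorem Measurable.comp_perm (hE : Measurable E) (π : Perm ι) : Measurable fun w => E (w ∘ π) :=
  hE.comp (measurable_comp_perm π)

theorem Measurable.permAvg (hE : Measurable E) : Measurable (permAvg φ E) :=
  (Finset.measurable_sum _ fun _ _ => hE.comp_perm _).div_const _

variable [Fintype ι]

theorem lintegral_comp_perm_pi {μ : ι → Measure Z} [∀ i, SigmaFinite (μ i)] {π : Perm ι}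
    (hμ : (fun i => μ (π i)) = μ) (hE : Measurable E) :
    ∫⁻ w, E (w ∘ π) ∂Measure.pi μ = ∫⁻ w, E w ∂Measure.pi μ := by
  rw [(Measure.measurePreserving_comp_perm μ π).lintegral_comp hE, hμ]

theorem lintegral_permAvg_pi {μ : ι → Measure Z} [∀ i, SigmaFinite (μ i)]
    (hμ : ∀ g, (fun i => μ (φ g i)) = μ) (hE : Measurable E) :
    ∫⁻ w, permAvg φ E w ∂Measure.pi μ = ∫⁻ w, E w ∂Measure.pi μ := by
  have hcard : (Fintype.card G : ℝ≥0∞) ≠ 0 := by simp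
  simp only [permAvg, ENNReal.div_eq_inv_mul]
  rw [lintegral_const_mul' _ _ (ENNReal.inv_ne_top.2 hcard),
    lintegral_finsetSum _ fun _ _ => hE.comp_perm _]
  simp only [lintegral_comp_perm_pi (hμ _) hE, Finset.sum_const, Finset.card_univ, nsmul_eq_mul,
    ← mul_assoc, ENNReal.inv_mul_cancel hcard (ENNReal.natCast_ne_top _), one_mul]

theorem lintegral_div_permAvg_pi_le_one {μ : ι → Measure Z} [∀ i, IsProbabilityMeasure (μ i)]
    (hμ : ∀ g, (fun i => μ (φ g i)) = μ) (hE : Measurable E) :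
    ∫⁻ w, E w / permAvg φ E w ∂Measure.pi μ ≤ 1 := by
  have hcard : (Fintype.card G : ℝ≥0∞) ≠ 0 := by simp
  have hm : Measurable fun w => E w / permAvg φ E w := hE.div hE.permAvg
  have hsum : ∀ w, ∑ g, E (w ∘ φ g) / permAvg φ E (w ∘ φ g) ≤ Fintype.card G := fun w => by
    simp only [permAvg_comp, div_eq_mul_inv, ← Finset.sum_mul,
      sum_comp_perm_eq_card_mul_permAvg, mul_assoc]
    exact mul_le_of_le_one_right' (ENNReal.mul_inv_le_one _)
  refine (ENNReal.mul_le_mul_iff_right hcard (ENNReal.natCast_ne_top _)).1 ?_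
  calc (Fintype.card G : ℝ≥0∞) * ∫⁻ w, E w / permAvg φ E w ∂Measure.pi μ
      = ∑ g : G, ∫⁻ w, E (w ∘ φ g) / permAvg φ E (w ∘ φ g) ∂Measure.pi μ := by
        simp [lintegral_comp_perm_pi (hμ _) hm]
    _ = ∫⁻ w, ∑ g, E (w ∘ φ g) / permAvg φ E (w ∘ φ g) ∂Measure.pi μ :=
        (lintegral_finsetSum _ fun g _ => hm.comp_perm (φ g)).symm
    _ ≤ ∫⁻ _, (Fintype.card G : ℝ≥0∞) ∂Measure.pi μ := lintegral_mono hsum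
    _ = Fintype.card G * 1 := by simp

end PermAvg

section Symmetrizations

variable {Z : Type*} {n : ℕ}

abbrev trainPermHom (n : ℕ) : Perm (Fin n) →* Perm (Fin (n+1)) :=
  Perm.viaEmbeddingHom Fin.castSuccEmb

theorem trainPermHom_castSucc (σ : Perm (Fin n)) (i : Fin n) :
    trainPermHom n σ i.castSucc = (σ i).castSucc :=
  Perm.viaEmbedding_apply σ Fin.castSuccEmb i

theorem trainPermHom_last (σ : Perm (Fin n)) : trainPermHom n σ (Fin.last n) = Fin.last n :=
  Perm.viaEmbedding_apply_of_notMem σ Fin.castSuccEmb _ (by simp)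

theorem Ei_eq_permAvg (E : (Fin (n+1) → Z) → ℝ≥0∞) :
    Ei n E = permAvg (MonoidHom.id (Perm (Fin (n+1)))) E := by
  funext w
  simp only [Ei, permAvg, Fintype.card_perm, Fintype.card_fin]
  rfl

theorem Et_eq_permAvg (E : (Fin (n+1) → Z) → ℝ≥0∞) : Et n E = permAvg (trainPermHom n) E := by
  funext w
  simp only [Et, permAvg, Fintype.card_perm, Fintype.card_fin]
  congr 2
  funext σ
  congr 1
  funext i
  induction i using Fin.lastCases with
  | last => simp [trainPermHom_last]
  | cast j => simp [trainPermHom_castSucc]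

theorem Measurable.Ei [MeasurableSpace Z] {E : (Fin (n+1) → Z) → ℝ≥0∞} (hE : Measurable E) :
    Measurable (Ei n E) :=
  Ei_eq_permAvg E ▸ hE.permAvg

theorem Measurable.Et [MeasurableSpace Z] {E : (Fin (n+1) → Z) → ℝ≥0∞} (hE : Measurable E) :
    Measurable (Et n E) :=
  Et_eq_permAvg E ▸ hE.permAvg

theorem div_EX_le_div_mul_Ei {E F : (Fin (n+1) → Z) → ℝ≥0∞} {w : Fin (n+1) → Z}
    (hEF : F w = 0 → E w = 0) (hF : F w ≠ ∞) :
    E w / EX n F w ≤ E w / F w * Ei n F w := by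
  rcases eq_or_ne (F w) 0 with h0 | h0
  · simp [hEF h0]
  rcases eq_or_ne (Ei n F w) 0 with hi | hi
  · simp [EX, h0, hi, ENNReal.div_zero h0]
  · rw [EX, if_neg (by tauto), div_eq_mul_inv, ENNReal.inv_div (Or.inr hF) (Or.inr h0),
      div_eq_mul_inv, div_eq_mul_inv, mul_assoc, mul_comm (Ei n F w)]

end Symmetrizations

theorem ENNReal.lintegral_sqrt_mul_le {α : Type*} [MeasurableSpace α] (μ : Measure α)
    {f g : α → ℝ≥0∞} (hf : AEMeasurable f μ) (hg : AEMeasurable g μ) :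
    ∫⁻ a, (f a * g a) ^ (1/2 : ℝ) ∂μ
      ≤ (∫⁻ a, f a ∂μ) ^ (1/2 : ℝ) * (∫⁻ a, g a ∂μ) ^ (1/2 : ℝ) := by
  have hsq : ∀ (h : α → ℝ≥0∞) a, (h a ^ (1/2 : ℝ)) ^ (2 : ℝ) = h a := fun h a => by
    rw [← ENNReal.rpow_mul]; norm_num
  calc ∫⁻ a, (f a * g a) ^ (1/2 : ℝ) ∂μ = ∫⁻ a, f a ^ (1/2 : ℝ) * g a ^ (1/2 : ℝ) ∂μ := by
        simp only [ENNReal.mul_rpow_of_nonneg _ _ (by norm_num : (0:ℝ) ≤ 1/2)]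
    _ ≤ (∫⁻ a, (f a ^ (1/2 : ℝ)) ^ (2 : ℝ) ∂μ) ^ (1/2 : ℝ)
          * (∫⁻ a, (g a ^ (1/2 : ℝ)) ^ (2 : ℝ) ∂μ) ^ (1/2 : ℝ) :=
        ENNReal.lintegral_mul_le_Lp_mul_Lq μ Real.HolderConjugate.two_two
          (hf.pow_const _) (hg.pow_const _)
    _ = _ := by simp only [hsq]

theorem one_le_div_add_one_pow_mul_exp_one (n : ℕ) :
    1 ≤ ((n : ℝ) / (n + 1)) ^ n * Real.exp 1 := by
  rcases Nat.eq_zero_or_pos n with rfl | hn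
  · simp [Real.one_le_exp zero_le_one]
  have hinv : (n : ℝ) / (n + 1) * (1 + (n : ℝ)⁻¹) = 1 := by field_simp
  calc (1 : ℝ) = ((n : ℝ) / (n + 1)) ^ n * (1 + (n : ℝ)⁻¹) ^ n := by rw [← mul_pow, hinv, one_pow]
    _ ≤ ((n : ℝ) / (n + 1)) ^ n * Real.exp 1 := by gcongr; exact Real.one_add_inv_pow_le_exp

section TwoSampleMixture

variable {Z : Type*} [MeasurableSpace Z]

instance isProbabilityMeasure_update {ι : Type*} [DecidableEq ι] (μ : ι → Measure Z)
    [∀ i, IsProbabilityMeasure (μ i)] (k : ι) (ν : Measure Z) [IsProbabilityMeasure ν] (j : ι) :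
    IsProbabilityMeasure (Function.update μ k ν j) := by
  rcases eq_or_ne j k with rfl | h
  · rwa [Function.update_self]
  · rw [Function.update_of_ne h]; infer_instance

variable {n : ℕ} {S : (Fin (n+1) → Z) → ℝ≥0∞}

theorem lintegral_pi_update_eq_of_comp_perm (hS : Measurable S)
    (hsymm : ∀ (π : Perm (Fin (n+1))) w, S (w ∘ π) = S w) (Q Q' : Measure Z)
    [IsProbabilityMeasure Q] [IsProbabilityMeasure Q'] (i k : Fin (n+1)) :
    ∫⁻ w, S w ∂Measure.pi (Function.update (fun _ => Q) k Q')
      = ∫⁻ w, S w ∂Measure.pi (Function.update (fun _ => Q) i Q') := by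
  have hswap : (fun j => Function.update (fun _ => Q) i Q' (swap i k j))
      = Function.update (fun _ => Q) k Q' := by
    simpa [Function.comp_def] using
      Function.update_comp_equiv (fun _ : Fin (n+1) => Q) (swap i k) i Q'
  rw [← hswap, ← (Measure.measurePreserving_comp_perm _ (swap i k)).lintegral_comp hS]
  simp only [hsymm]

theorem lintegral_pi_update_le_exp_one (hS : Measurable S)
    (hsymm : ∀ (π : Perm (Fin (n+1))) w, S (w ∘ π) = S w)
    (hiid : ∀ R : Measure Z, IsProbabilityMeasure R → ∫⁻ w, S w ∂Measure.pi (fun _ => R) ≤ 1)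
    (Q Q' : Measure Z) [IsProbabilityMeasure Q] [IsProbabilityMeasure Q'] (i : Fin (n+1)) :
    ∫⁻ w, S w ∂Measure.pi (Function.update (fun _ => Q) i Q') ≤ ENNReal.ofReal (Real.exp 1) := by
  set I := ∫⁻ w, S w ∂Measure.pi (Function.update (fun _ => Q) i Q')
  set a : ℝ≥0 := n / (n + 1)
  set b : ℝ≥0 := 1 / (n + 1)
  have hb : (n + 1 : ℝ≥0) * b = 1 := by simp [b]
  have hba : b + a = 1 := by rw [← add_div, add_comm, div_self (by positivity)]
  have : IsProbabilityMeasure (b • Q' + a • Q) := ⟨by simp [← ENNReal.coe_add, hba]⟩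
  have hterm : ∀ k, ∫⁻ w, S w ∂Measure.pi (Function.update (fun _ => a • Q) k (b • Q'))
      = (b * a ^ n : ℝ≥0) * I := fun k => by
    have hsplit : Function.update (fun _ => a • Q) k (b • Q')
        = fun j => Function.update (fun _ => a) k b j • Function.update (fun _ => Q) k Q' j := by
      funext j
      rcases eq_or_ne j k with rfl | h <;> simp [Function.update_of_ne, *]
    rw [hsplit, Measure.pi_nnreal_smul, lintegral_smul_measure,
      lintegral_pi_update_eq_of_comp_perm hS hsymm Q Q' i k,
      Finset.prod_update_of_mem (Finset.mem_univ k)]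
    simp [Finset.card_sdiff, ENNReal.smul_def, I]
  have hmix : ((n + 1 : ℝ≥0) * (b * a ^ n) : ℝ≥0) * I ≤ 1 := calc
    _ = ∑ k, ∫⁻ w, S w ∂Measure.pi (Function.update (fun _ => a • Q) k (b • Q')) := by
        simp [hterm, mul_assoc]
    _ = ∫⁻ w, S w ∂(∑ k, Measure.pi (Function.update (fun _ => a • Q) k (b • Q'))) :=
        (lintegral_finsetSum_measure _ _ _).symm
    _ ≤ ∫⁻ w, S w ∂Measure.pi (fun _ => b • Q' + a • Q) :=
        lintegral_mono' (Measure.sum_pi_update_le_pi_add _ _) le_rfl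
    _ ≤ 1 := hiid _ this
  rw [← mul_assoc, hb, one_mul] at hmix
  have hexp : 1 ≤ (a ^ n : ℝ≥0) * ENNReal.ofReal (Real.exp 1) := by
    rw [← ENNReal.ofReal_coe_nnreal, ← ENNReal.ofReal_mul (by positivity)]
    exact ENNReal.one_le_ofReal.2 (by simpa [a] using one_le_div_add_one_pow_mul_exp_one n)
  calc I ≤ I * ((a ^ n : ℝ≥0) * ENNReal.ofReal (Real.exp 1)) := le_mul_of_one_le_right' hexp
    _ = ((a ^ n : ℝ≥0) * I) * ENNReal.ofReal (Real.exp 1) := by ring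
    _ ≤ ENNReal.ofReal (Real.exp 1) := mul_le_of_le_one_left' hmix

end TwoSampleMixture

section Relabel

variable {Z : Type*} [MeasurableSpace Z] {n : ℕ}

theorem measurable_snoc :
    Measurable fun p : (Fin n → Z) × Z => (Fin.snoc p.1 p.2 : Fin (n+1) → Z) := by
  simpa [Function.comp_def, Fin.insertNth_last', Fin.snocEquiv] using
    (MeasurableEquiv.piFinSuccAbove (fun _ => Z) (Fin.last n)).symm.measurable.comp measurable_swap

theorem lintegral_pi_eq_lintegral_lintegral_snoc (μ : Fin (n+1) → Measure Z)
    [∀ i, SigmaFinite (μ i)] {F : (Fin (n+1) → Z) → ℝ≥0∞} (hF : Measurable F) :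
    ∫⁻ w, F w ∂Measure.pi μ
      = ∫⁻ a, ∫⁻ t, F (Fin.snoc t a) ∂Measure.pi (fun i => μ i.castSucc) ∂μ (Fin.last n) := by
  set e := MeasurableEquiv.piFinSuccAbove (fun _ => Z) (Fin.last n)
  rw [← (measurePreserving_piFinSuccAbove μ (Fin.last n)).symm.lintegral_comp hF,
    lintegral_prod (fun p => F (e.symm p)) (hF.comp e.symm.measurable).aemeasurable]
  simp [e, MeasurableEquiv.piFinSuccAbove_symm_apply, Fin.insertNthEquiv, Fin.insertNth_last']

variable {X Y : Type*} [MeasurableSpace X] [MeasurableSpace Y]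

def relabel (Q : Measure (X × Y)) (B : Kernel (X × Y) Y) : Measure (X × Y) :=
  (Q ⊗ₘ B).map fun p => (p.1.1, p.2)

instance (Q : Measure (X × Y)) [IsProbabilityMeasure Q] (B : Kernel (X × Y) Y)
    [IsMarkovKernel B] : IsProbabilityMeasure (relabel Q B) :=
  Measure.isProbabilityMeasure_map (by fun_prop)

omit [MeasurableSpace X] [MeasurableSpace Y] in
theorem withLabel_snoc (t : Fin n → X × Y) (a : X × Y) (y : Y) :
    withLabel n (Fin.snoc t a) y = Fin.snoc t (a.1, y) := by
  simp [withLabel]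

theorem measurable_withLabel :
    Measurable fun p : (Fin (n+1) → X × Y) × Y => withLabel n p.1 p.2 :=
  measurable_snoc.comp (show Measurable fun p : (Fin (n+1) → X × Y) × Y =>
    ((fun i : Fin n => p.1 i.castSucc), ((p.1 (Fin.last n)).1, p.2)) by fun_prop)

theorem Measurable.lintegral_kernel_withLabel (B : Kernel (X × Y) Y) [IsSFiniteKernel B]
    {F : (Fin (n+1) → X × Y) → ℝ≥0∞} (hF : Measurable F) :
    Measurable fun z => ∫⁻ y, F (withLabel n z y) ∂B (z (Fin.last n)) :=
  Measurable.lintegral_kernel_prod_right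
    (κ := B.comap (fun z : Fin (n+1) → X × Y => z (Fin.last n)) (by fun_prop))
    (f := fun z y => F (withLabel n z y)) (hF.comp measurable_withLabel)

theorem lintegral_lintegral_withLabel (Q : Measure (X × Y)) [IsProbabilityMeasure Q]
    (B : Kernel (X × Y) Y) [IsMarkovKernel B] {F : (Fin (n+1) → X × Y) → ℝ≥0∞}
    (hF : Measurable F) :
    ∫⁻ z, ∫⁻ y, F (withLabel n z y) ∂B (z (Fin.last n)) ∂Measure.pi (fun _ => Q)
      = ∫⁻ w, F w ∂Measure.pi (Function.update (fun _ => Q) (Fin.last n) (relabel Q B)) := by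
  have hFsnoc : Measurable fun p : (Fin n → X × Y) × (X × Y) => F (Fin.snoc p.1 p.2) :=
    hF.comp measurable_snoc
  have hsection : Measurable fun a => ∫⁻ t, F (Fin.snoc t a) ∂Measure.pi fun _ : Fin n => Q :=
    hFsnoc.lintegral_prod_left'
  rw [lintegral_pi_eq_lintegral_lintegral_snoc _ (hF.lintegral_kernel_withLabel B),
    lintegral_pi_eq_lintegral_lintegral_snoc _ hF]
  simp only [Function.update_self, Function.update_of_ne (Fin.castSucc_ne_last _), withLabel_snoc,
    Fin.snoc_last]
  rw [relabel, lintegral_map hsection (by fun_prop),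
    Measure.lintegral_compProd
      (f := fun p : (X × Y) × Y => ∫⁻ t, F (Fin.snoc t (p.1.1, p.2)) ∂Measure.pi fun _ : Fin n => Q)
      (hsection.comp (by fun_prop))]
  refine lintegral_congr fun a => lintegral_lintegral_swap ?_
  exact (hFsnoc.comp
    (show Measurable fun p : (Fin n → X × Y) × Y => (p.1, (a.1, p.2)) by fun_prop)).aemeasurable

end Relabel

section Bounds

variable {Z : Type*} [MeasurableSpace Z] {n : ℕ} {E : (Fin (n+1) → Z) → ℝ≥0∞}

theorem Measurable.EX {F : (Fin (n+1) → Z) → ℝ≥0∞} (hF : Measurable F) :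
    Measurable (EX n F) :=
  Measurable.ite ((hF (measurableSet_singleton 0)).inter (hF.Ei (measurableSet_singleton 0)))
    measurable_const (hF.div hF.Ei)

theorem update_last_comp_trainPermHom (Q Q' : Measure Z) (σ : Perm (Fin n)) :
    (fun i => Function.update (fun _ => Q) (Fin.last n) Q' (trainPermHom n σ i))
      = Function.update (fun _ => Q) (Fin.last n) Q' := by
  have hlast : (trainPermHom n σ).symm (Fin.last n) = Fin.last n :=
    (Equiv.symm_apply_eq _).2 (trainPermHom_last σ).symm
  simpa [Function.comp_def, hlast] using
    Function.update_comp_equiv (fun _ : Fin (n+1) => Q) (trainPermHom n σ) (Fin.last n) Q'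

theorem lintegral_div_Et_le_one (hE : Measurable E) (Q Q' : Measure Z) [IsProbabilityMeasure Q]
    [IsProbabilityMeasure Q'] :
    ∫⁻ w, E w / Et n E w ∂Measure.pi (Function.update (fun _ => Q) (Fin.last n) Q') ≤ 1 := by
  rw [Et_eq_permAvg]
  exact lintegral_div_permAvg_pi_le_one (update_last_comp_trainPermHom Q Q') hE

theorem lintegral_Ei_Et_le_exp_one (hE : IsRandE n E) (Q Q' : Measure Z) [IsProbabilityMeasure Q]
    [IsProbabilityMeasure Q'] (i : Fin (n+1)) :
    ∫⁻ w, Ei n (Et n E) w ∂Measure.pi (Function.update (fun _ => Q) i Q')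
      ≤ ENNReal.ofReal (Real.exp 1) := by
  rw [Ei_eq_permAvg, Et_eq_permAvg]
  refine lintegral_pi_update_le_exp_one hE.1.permAvg.permAvg (fun π w => permAvg_comp π w)
    (fun R _ => ?_) Q Q' i
  rw [lintegral_permAvg_pi (fun _ => rfl) hE.1.permAvg, lintegral_permAvg_pi (fun _ => rfl) hE.1]
  exact hE.2 R ‹_›

theorem lintegral_sqrt_div_EX_Et_le (ν : Measure (Fin (n+1) → Z)) (hE : Measurable E)
    (hfin : ∫⁻ w, Ei n (Et n E) w ∂ν ≠ ∞) :
    ∫⁻ w, (E w / EX n (Et n E) w) ^ (1/2 : ℝ) ∂ν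
      ≤ (∫⁻ w, E w / Et n E w ∂ν) ^ (1/2 : ℝ) * (∫⁻ w, Ei n (Et n E) w ∂ν) ^ (1/2 : ℝ) := by
  have hEt : Measurable (Et n E) := hE.Et
  have hEi : Measurable (Ei n (Et n E)) := hEt.Ei
  have hfinite : ∀ᵐ w ∂ν, Et n E w ≠ ∞ := (ae_lt_top hEi hfin).mono fun w hw => by
    have hle : Et n E w ≤ Fintype.card (Perm (Fin (n+1))) * Ei n (Et n E) w := by
      rw [Ei_eq_permAvg]; exact le_card_mul_permAvg w
    exact ne_top_of_le_ne_top (ENNReal.mul_ne_top (ENNReal.natCast_ne_top _) hw.ne) hle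
  calc ∫⁻ w, (E w / EX n (Et n E) w) ^ (1/2 : ℝ) ∂ν
      ≤ ∫⁻ w, (E w / Et n E w * Ei n (Et n E) w) ^ (1/2 : ℝ) ∂ν := by
        refine lintegral_mono_ae (hfinite.mono fun w hw => ?_)
        refine ENNReal.rpow_le_rpow (div_EX_le_div_mul_Ei (fun h => ?_) hw) (by norm_num)
        exact eq_zero_of_permAvg_eq_zero (φ := trainPermHom n) (Et_eq_permAvg E ▸ h)
    _ ≤ _ := ENNReal.lintegral_sqrt_mul_le ν (hE.div hEt).aemeasurable hEi.aemeasurable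

end Bounds

theorem stmt7_general {X Y : Type*} [MeasurableSpace X] [MeasurableSpace Y]
    (n : ℕ) (B : Kernel (X × Y) Y) [IsMarkovKernel B]
    (E : (Fin (n+1) → X × Y) → ℝ≥0∞) (hE : IsRandE n E) :
    IsRandE n (fun z =>
      ENNReal.ofReal (Real.exp (-(1/2))) *
        ∫⁻ y, (E (withLabel n z y) / EX n (Et n E) (withLabel n z y)) ^ ((1:ℝ)/2)
          ∂(B (z (Fin.last n)))) := by
  have hF : Measurable fun w => (E w / EX n (Et n E) w) ^ ((1:ℝ)/2) :=
    (hE.1.div hE.1.Et.EX).pow_const _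
  refine ⟨(hF.lintegral_kernel_withLabel B).const_mul _, fun Q _ => ?_⟩
  have hdiv := lintegral_div_Et_le_one hE.1 Q (relabel Q B)
  have hEi := lintegral_Ei_Et_le_exp_one hE Q (relabel Q B) (Fin.last n)
  rw [lintegral_const_mul _ (hF.lintegral_kernel_withLabel B), lintegral_lintegral_withLabel Q B hF]
  calc _ ≤ ENNReal.ofReal (Real.exp (-(1/2)))
        * (1 ^ (1/2 : ℝ) * ENNReal.ofReal (Real.exp 1) ^ (1/2 : ℝ)) := by
        gcongr
        exact (lintegral_sqrt_div_EX_Et_le _ hE.1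
          (ne_top_of_le_ne_top ENNReal.ofReal_ne_top hEi)).trans (by gcongr)
    _ = 1 := by
        rw [ENNReal.one_rpow, one_mul, ENNReal.ofReal_rpow_of_pos (Real.exp_pos 1),
          Real.exp_one_rpow, ← ENNReal.ofReal_mul (Real.exp_nonneg _), ← Real.exp_add]
        norm_num

/-- Corollary: for any randomness e-variable `E`, the function
`G := e^{-1/2} ∫ √(E(z_1,…,z_n,x_{n+1},y) / E^{tX}(z_1,…,z_n,x_{n+1},y)) B(dy|z_{n+1})`
(with `0/0 := 0`) is a randomness e-variable, where `E^{tX} := (E^t)^X`. -/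
theorem stmt7 {X Y : Type*} [MeasurableSpace X] [Nonempty X] [MeasurableSpace Y]
    (n : ℕ) (hn : 1 ≤ n) (B : Kernel (X × Y) Y) [IsMarkovKernel B]
    (E : (Fin (n+1) → X × Y) → ℝ≥0∞) (hE : IsRandE n E) :
    IsRandE n (fun z =>
      ENNReal.ofReal (Real.exp (-(1/2))) *
        ∫⁻ y, (E (withLabel n z y) / EX n (Et n E) (withLabel n z y)) ^ ((1:ℝ)/2)
          ∂(B (z (Fin.last n)))) :=
  stmt7_general n B E hE

end
end

section
/- If G₂ : Z^{n+1} → [0,∞] is an invariant randomness e-variable (a randomness e-variable invariant under all permutations of the n+1 coordinates) and G₃ : Z^{n+1} → [0,∞] is an exchangeability e-variable, then the pointwise product G₂·G₃ is a randomness e-variable. -/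
open MeasureTheory ProbabilityTheory
open scoped ENNReal NNReal

/-! Write `μ = Q^{n+1}`. Since `G₂` is permutation invariant, the measure `R = G₂ · μ` is
exchangeable, and its total mass `∫ G₂ dμ` is at most `1`. An exchangeability e-variable has
integral at most the total mass under any exchangeable measure (normalize `R`), so
`∫ G₂ G₃ dμ = ∫ G₃ dR ≤ R(Z^{n+1}) ≤ 1`. -/

noncomputable section

theorem MeasureTheory.MeasurePreserving.map_withDensity_of_comp_eq {α : Type*}
    [MeasurableSpace α] {μ : Measure α} {g : α → α} (hg : MeasurePreserving g μ μ)
    {f : α → ℝ≥0∞} (hf : Measurable f) (hfg : ∀ x, f (g x) = f x) :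
    (μ.withDensity f).map g = μ.withDensity f := by
  ext s hs
  rw [Measure.map_apply hg.measurable hs, withDensity_apply _ (hg.measurable hs),
    withDensity_apply _ hs, ← hg.setLIntegral_comp_preimage hs hf]
  simp only [hfg]

theorem MeasureTheory.measurePreserving_pi_comp_perm {ι Z : Type*} [Fintype ι]
    [MeasurableSpace Z] (Q : Measure Z) [SigmaFinite Q] (π : Equiv.Perm ι) :
    MeasurePreserving (fun (z : ι → Z) i => z (π i))
      (Measure.pi fun _ => Q) (Measure.pi fun _ => Q) := by
  convert measurePreserving_piCongrLeft (fun _ : ι => Q) π.symm using 1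
  funext z i
  conv_rhs => rw [← π.symm_apply_apply i]
  rw [MeasurableEquiv.piCongrLeft_apply_apply]

theorem isExchangeable_pi {Z : Type*} [MeasurableSpace Z] (n : ℕ) (Q : Measure Z)
    [SigmaFinite Q] : IsExchangeable n (Measure.pi fun _ : Fin (n+1) => Q) :=
  fun π => (measurePreserving_pi_comp_perm Q π).map_eq

theorem IsExchangeable.withDensity {Z : Type*} [MeasurableSpace Z] {n : ℕ}
    {ν : Measure (Fin (n+1) → Z)} (hν : IsExchangeable n ν) {f : (Fin (n+1) → Z) → ℝ≥0∞}
    (hf : Measurable f) (hinv : ∀ z (π : Equiv.Perm (Fin (n+1))), f (fun i => z (π i)) = f z) :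
    IsExchangeable n (ν.withDensity f) := fun π =>
  MeasurePreserving.map_withDensity_of_comp_eq
    ⟨measurable_pi_lambda _ fun i => measurable_pi_apply (π i), hν π⟩ hf (hinv · π)

theorem IsExchE.lintegral_le_measure_univ {Z : Type*} [MeasurableSpace Z] {n : ℕ}
    {E : (Fin (n+1) → Z) → ℝ≥0∞} (hE : IsExchE n E) {ν : Measure (Fin (n+1) → Z)}
    (hν : IsExchangeable n ν) : ∫⁻ z, E z ∂ν ≤ ν Set.univ := by
  rcases eq_or_ne ν 0 with rfl | hν₀
  · simp
  rcases eq_or_ne (ν Set.univ) ∞ with htop | htop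
  · exact htop ▸ le_top
  have : IsFiniteMeasure ν := ⟨htop.lt_top⟩
  have : NeZero ν := ⟨hν₀⟩
  have hnorm : IsExchangeable n ((ν Set.univ)⁻¹ • ν) := fun π => by
    rw [Measure.map_smul, hν π]
  have h := hE.2 _ inferInstance hnorm
  rwa [lintegral_smul_measure, smul_eq_mul,
    ENNReal.inv_mul_le_iff (by simpa using hν₀) htop, mul_one] at h

theorem stmt13_general {Z : Type*} [MeasurableSpace Z] (n : ℕ)
    (G₂ G₃ : (Fin (n+1) → Z) → ℝ≥0∞)
    (hG₂ : IsRandE n G₂)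
    (hinv : ∀ (z : Fin (n+1) → Z) (π : Equiv.Perm (Fin (n+1))),
      G₂ (fun i => z (π i)) = G₂ z)
    (hG₃ : IsExchE n G₃) :
    IsRandE n (fun z => G₂ z * G₃ z) := by
  refine ⟨hG₂.1.mul hG₃.1, fun Q hQ => ?_⟩
  set μ := Measure.pi fun _ : Fin (n+1) => Q
  calc ∫⁻ z, G₂ z * G₃ z ∂μ = ∫⁻ z, G₃ z ∂(μ.withDensity G₂) :=
        (lintegral_withDensity_eq_lintegral_mul μ hG₂.1 hG₃.1).symm
    _ ≤ μ.withDensity G₂ Set.univ :=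
        hG₃.lintegral_le_measure_univ ((isExchangeable_pi n Q).withDensity hG₂.1 hinv)
    _ = ∫⁻ z, G₂ z ∂μ := by rw [withDensity_apply _ MeasurableSet.univ, Measure.restrict_univ]
    _ ≤ 1 := hG₂.2 Q hQ

/-- If `G₂` is an invariant randomness e-variable and `G₃` is an exchangeability e-variable,
then the pointwise product `G₂·G₃` is a randomness e-variable. -/
theorem stmt13 {Z : Type*} [MeasurableSpace Z] (n : ℕ) (hn : 1 ≤ n)
    (G₂ G₃ : (Fin (n+1) → Z) → ℝ≥0∞)
    (hG₂ : IsRandE n G₂)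
    (hinv : ∀ (z : Fin (n+1) → Z) (π : Equiv.Perm (Fin (n+1))),
      G₂ (fun i => z (π i)) = G₂ z)
    (hG₃ : IsExchE n G₃) :
    IsRandE n (fun z => G₂ z * G₃ z) :=
  stmt13_general n G₂ G₃ hG₂ hinv hG₃

end
end
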